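/- arXiv:1803.02853 — 4 statements merged into one kernel-verified Lean document; each statement's English description precedes it below -/
import Mathlib

section
/- For any nonzero a ∈ ℂ and every nonconstant polynomial curve γ: ℂ → ℂ² with γ(0) = 0, min(v((z₁³ + a z₁ z₂) ∘ γ), v(z₂² ∘ γ)) ≤ 4 · v(γ), where v denotes the order of vanishing at 0 and v(γ) is the minimum of the orders of the two coordinate functions of γ. -/
open PowerSeries

/-- order of a nonzero constant is 0 -/
lemma order_C_of_ne {R : Type*} [CommSemiring R] [NoZeroDivisors R] {a : R} (ha : a ≠ 0) :
    (PowerSeries.C a).order = 0 := by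
  have := PowerSeries.order_monomial_of_ne_zero 0 a ha
  simpa using this

/-- For any nonzero `a : ℂ` and any nonconstant polynomial curve
`γ = (γ₁, γ₂) : ℂ → ℂ²` with `γ(0) = 0`,
`min (v((z₁³ + a z₁ z₂) ∘ γ)) (v(z₂² ∘ γ)) ≤ 4 · v(γ)`, where `v(γ)` is the
minimum of the orders of vanishing at 0 of the two coordinate functions
(computed as orders of the associated power series, so that `v(0) = ∞`). -/
theorem stmt_1 (a : ℂ) (ha : a ≠ 0) (γ₁ γ₂ : Polynomial ℂ)
    (h₁ : γ₁.eval 0 = 0) (h₂ : γ₂.eval 0 = 0) (hnc : ¬(γ₁ = 0 ∧ γ₂ = 0)) :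
    min ((↑(γ₁ ^ 3 + Polynomial.C a * γ₁ * γ₂) : PowerSeries ℂ).order)
        ((↑(γ₂ ^ 2) : PowerSeries ℂ).order) ≤
      4 * min (↑γ₁ : PowerSeries ℂ).order (↑γ₂ : PowerSeries ℂ).order := by
  set p : PowerSeries ℂ := (γ₁ : PowerSeries ℂ) with hp
  set q : PowerSeries ℂ := (γ₂ : PowerSeries ℂ) with hq
  have hcast1 : (↑(γ₁ ^ 3 + Polynomial.C a * γ₁ * γ₂) : PowerSeries ℂ)
      = p * (p ^ 2 + PowerSeries.C a * q) := by
    push_cast [Polynomial.coe_add, Polynomial.coe_mul, Polynomial.coe_pow, Polynomial.coe_C]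
    ring
  have hcast2 : (↑(γ₂ ^ 2) : PowerSeries ℂ) = q * q := by
    push_cast [Polynomial.coe_mul, Polynomial.coe_pow]; ring
  rw [hcast1, hcast2, PowerSeries.order_mul, PowerSeries.order_mul]
  set m := p.order with hm
  set n := q.order with hn
  rcases le_or_gt n m with hle | hlt
  · -- min m n = n, use second term
    calc min (m + (p^2 + PowerSeries.C a * q).order) (n + n) ≤ n + n := min_le_right _ _
    _ ≤ 4 * min m n := by
        rw [min_eq_right hle]
        have : n + n = 2 * n := (two_mul n).symm
        rw [this]
        exact mul_le_mul_left (by norm_num) n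
  · -- m < n, so m finite
    have hmfin : m ≠ ⊤ := (hlt.trans_le le_top).ne
    rw [min_eq_left hlt.le]
    rcases eq_or_ne n (2 * m) with heq | hne
    · -- n = 2m : second term = 4m
      refine le_trans (min_le_right _ _) ?_
      rw [heq]
      calc 2 * m + 2 * m = 4 * m := by ring
      _ ≤ 4 * m := le_refl _
    · -- n ≠ 2m : first term ≤ 3m
      refine le_trans (min_le_left _ _) ?_
      have h2m : (p ^ 2).order = 2 * m := by
        rw [pow_two, PowerSeries.order_mul, two_mul]
      have hCq : (PowerSeries.C a * q).order = n := by
        rw [PowerSeries.order_mul, order_C_of_ne ha, zero_add]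
      have horder : (p ^ 2 + PowerSeries.C a * q).order = min (2 * m) n := by
        rw [PowerSeries.order_add_of_order_ne]
        · rw [h2m, hCq]
        · rw [h2m, hCq]; exact fun h => hne h.symm
      rw [horder]
      calc m + min (2 * m) n ≤ m + 2 * m := add_le_add_right (min_le_left _ _) m
      _ = 3 * m := by ring
      _ ≤ 4 * m := mul_le_mul_left (by norm_num) m
end

section
/- For every m ≥ 2 and nonzero a ∈ ℂ, the power series equation t^m + a·t·y(t) + b·y(t)² = 0 with y(0) = 0 has a formal power series solution y ∈ ℂ[[t]] with v(y) = m - 1. -/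
open PowerSeries

/-!
Writing `y = X^(m-1) / s` with `s` a unit turns the equation into `s² + a s + b X^(m-2) = 0`.
For `m > 2` this is `T² + a T ≡ 0` modulo `X`, of which `-a` is a simple root, so Hensel's lemma
in the `X`-adically complete ring `ℂ⟦X⟧` lifts it to a unit root. For `m = 2` the equation has
constant coefficients, and one of its two complex roots is nonzero because they sum to `-a ≠ 0`.
-/

section

variable {K : Type*} [Field K]

theorem exists_ne_zero_sq_add_mul_add_eq_zero [IsAlgClosed K] {a : K} (ha : a ≠ 0) (b : K) :
    ∃ r : K, r ≠ 0 ∧ r ^ 2 + a * r + b = 0 := by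
  obtain ⟨r, hr⟩ := IsAlgClosed.exists_root
    (Polynomial.X ^ 2 + Polynomial.C a * Polynomial.X + Polynomial.C b)
    (ne_of_eq_of_ne (by compute_degree!) two_ne_zero)
  replace hr : r ^ 2 + a * r + b = 0 := by simpa using hr
  by_cases hr0 : r = 0
  · exact ⟨-a - r, by simpa [hr0] using ha, by linear_combination hr⟩
  · exact ⟨r, hr0, hr⟩

namespace PowerSeries

theorem exists_isUnit_sq_add_mul_add_mul_X_pow_eq_zero_of_ne_zero {a : K} (ha : a ≠ 0) (b : K)
    {n : ℕ} (hn : n ≠ 0) : ∃ s : K⟦X⟧, IsUnit s ∧ s ^ 2 + C a * s + C b * X ^ n = 0 := by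
  let f : Polynomial K⟦X⟧ :=
    Polynomial.X ^ 2 + Polynomial.C (C a) * Polynomial.X + Polynomial.C (C b * X ^ n)
  have hf : f.Monic := by unfold f; monicity!
  have hroot : f.eval (C (-a)) ∈ Ideal.span {X} := by
    have : f.eval (C (-a)) = C b * X ^ n := by
      simp only [f, Polynomial.eval_add, Polynomial.eval_mul, Polynomial.eval_pow,
        Polynomial.eval_X, Polynomial.eval_C, map_neg]
      ring
    rw [this, Ideal.mem_span_singleton]
    exact dvd_mul_of_dvd_right (dvd_pow_self X hn) _
  have hsimple : IsUnit (Ideal.Quotient.mk (Ideal.span {X}) (f.derivative.eval (C (-a)))) := by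
    have : f.derivative.eval (C (-a)) = C (-a) := by
      simp only [f, Polynomial.derivative_add, Polynomial.derivative_X_pow,
        Polynomial.derivative_C_mul_X, Polynomial.derivative_C, add_zero, Polynomial.eval_add,
        Polynomial.eval_mul, Polynomial.eval_pow, Polynomial.eval_X, Polynomial.eval_C, map_neg]
      push_cast
      ring
    rw [this]
    exact (isUnit_iff_constantCoeff.2 (by simpa using ha)).map _
  obtain ⟨s, hs, hsa⟩ := HenselianRing.is_henselian f hf _ hroot hsimple
  rw [Ideal.mem_span_singleton, X_dvd_iff, map_sub, constantCoeff_C, sub_eq_zero] at hsa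
  refine ⟨s, isUnit_iff_constantCoeff.2 ?_, by simpa [f] using hs⟩
  rw [hsa]
  exact (neg_ne_zero.2 ha).isUnit

theorem exists_isUnit_sq_add_mul_add_mul_X_pow_eq_zero [IsAlgClosed K] {a : K} (ha : a ≠ 0)
    (b : K) (n : ℕ) : ∃ s : K⟦X⟧, IsUnit s ∧ s ^ 2 + C a * s + C b * X ^ n = 0 := by
  rcases eq_or_ne n 0 with rfl | hn
  · obtain ⟨r, hr0, hr⟩ := exists_ne_zero_sq_add_mul_add_eq_zero ha b
    refine ⟨C r, isUnit_iff_constantCoeff.2 (by simpa using hr0), ?_⟩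
    simp only [pow_zero, mul_one, ← map_pow, ← map_mul, ← map_add, hr, map_zero]
  · exact exists_isUnit_sq_add_mul_add_mul_X_pow_eq_zero_of_ne_zero ha b hn

end PowerSeries

end

/-- For every `m ≥ 2`, nonzero `a : ℂ` and arbitrary `b : ℂ`, the equation
`t^m + a·t·y(t) + b·y(t)² = 0` with `y(0) = 0` has a formal power series
solution `y ∈ ℂ[[t]]` with `v(y) = m - 1`. -/
theorem stmt_5 (m : ℕ) (hm : 2 ≤ m) (a : ℂ) (ha : a ≠ 0) (b : ℂ) :
    ∃ y : ℂ⟦X⟧, constantCoeff y = 0 ∧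
      (X : ℂ⟦X⟧) ^ m + C a * X * y + C b * y ^ 2 = 0 ∧
      y.order = (m - 1 : ℕ) := by
  obtain ⟨n, rfl⟩ : ∃ n, m = n + 2 := ⟨m - 2, by omega⟩
  obtain ⟨_, ⟨s, rfl⟩, hs⟩ := exists_isUnit_sq_add_mul_add_mul_X_pow_eq_zero ha b n
  set u : ℂ⟦X⟧ := ↑s⁻¹
  refine ⟨X ^ (n + 1) * u, by simp [pow_succ], ?_, ?_⟩
  · have hsu : (s : ℂ⟦X⟧) * u = 1 := s.mul_inv
    linear_combination X ^ (n + 2) * u ^ 2 * hs - X ^ (n + 2) * (s * u + 1 + C a * u) * hsu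
  · rw [order_mul, order_X_pow, order_zero_of_unit s⁻¹.isUnit, add_zero]
    rfl
end

section
/- For every nonconstant formal power series curve γ = (γ₁, γ₂, γ₃): ℂ → ℂ³ with γ(0) = 0, min(v((z₁³ − z₃z₂) ∘ γ), v(z₂² ∘ γ), v(z₃ ∘ γ)) ≤ 3 · v(γ), where v(γ) = min(v(γ₁), v(γ₂), v(γ₃)). That is, the 1-type of the ideal (z₁³ − z₃z₂, z₂², z₃) in three variables is at most 3. -/
/-!
If neither `γ₃` nor `γ₂²` vanishes to order at most `3 v(γ)`, then `v(γ)` is attained by `γ₁`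
alone, so `γ₁³` vanishes to order exactly `3 v(γ)` while `γ₃ γ₂` vanishes to a strictly higher
order; hence `γ₁³ - γ₃ γ₂` has order exactly `3 v(γ)`.
-/

open PowerSeries

theorem PowerSeries.order_sub_of_order_lt {R : Type*} [Ring R] {φ ψ : R⟦X⟧}
    (h : φ.order < ψ.order) : (φ - ψ).order = φ.order := by
  rw [sub_eq_add_neg, order_add_of_order_ne _ _ (by rw [order_neg]; exact h.ne), order_neg,
    inf_eq_left.2 h.le]

theorem ENat.eq_min_of_three_mul_min_lt {a b c : ℕ∞} (hb : 3 * min (min a b) c < 2 * b)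
    (hc : 3 * min (min a b) c < c) : a = min (min a b) c := by
  rcases min_choice (min a b) c with h | h
  · rcases min_choice a b with h' | h'
    · rw [h, h']
    · rw [h, h'] at hb
      exact absurd hb (not_lt.2 (by gcongr; norm_num))
  · rw [h] at hc
    exact absurd hc (not_lt.2 (le_mul_of_one_le_left' (by norm_num)))

theorem stmt_6_general (γ₁ γ₂ γ₃ : ℂ⟦X⟧) :
    min (min (γ₁ ^ 3 - γ₃ * γ₂).order (γ₂ ^ 2).order) γ₃.order ≤
      3 * min (min γ₁.order γ₂.order) γ₃.order := by
  set m := min (min γ₁.order γ₂.order) γ₃.order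
  by_contra! h
  obtain ⟨⟨hsub, hγ₂⟩, hγ₃⟩ := lt_min_iff.1 h |>.imp_left lt_min_iff.1
  rw [order_pow, nsmul_eq_mul, Nat.cast_ofNat] at hγ₂
  have hγ₁ : γ₁.order = m := ENat.eq_min_of_three_mul_min_lt hγ₂ hγ₃
  have hcube : (γ₁ ^ 3).order = 3 * m := by
    rw [order_pow, nsmul_eq_mul, Nat.cast_ofNat, hγ₁]
  have hprod : (γ₁ ^ 3).order < (γ₃ * γ₂).order := by
    rw [hcube, order_mul]
    exact hγ₃.trans_le le_self_add
  exact hsub.ne' (by rw [order_sub_of_order_lt hprod, hcube])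

/-- For every nonconstant formal power series curve `γ = (γ₁, γ₂, γ₃)` with
`γ(0) = 0`, `min (v(γ₁³ - γ₃γ₂)) (v(γ₂²)) (v(γ₃)) ≤ 3 · v(γ)` where
`v(γ) = min (v(γ₁)) (v(γ₂)) (v(γ₃))`: the 1-type of the ideal
`(z₁³ - z₃z₂, z₂², z₃)` is at most 3. -/
theorem stmt_6 (γ₁ γ₂ γ₃ : ℂ⟦X⟧)
    (h₁ : constantCoeff γ₁ = 0) (h₂ : constantCoeff γ₂ = 0)
    (h₃ : constantCoeff γ₃ = 0) (hnc : ¬(γ₁ = 0 ∧ γ₂ = 0 ∧ γ₃ = 0)) :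
    min (min (γ₁ ^ 3 - γ₃ * γ₂).order (γ₂ ^ 2).order) γ₃.order ≤
      3 * min (min γ₁.order γ₂.order) γ₃.order :=
  stmt_6_general γ₁ γ₂ γ₃
end

section
/- For the ideal I = (z₁³ + a z₁ z₂, z₂²) in ℂ[[z₁, z₂]] with a = 0: for every nonconstant power series curve γ = (γ₁, γ₂) with γ(0) = 0, min(v(γ₁³), v(γ₂²)) ≤ 3·min(v(γ₁), v(γ₂)), and there is a curve achieving equality; hence the 1-type of (z₁³, z₂²) is exactly 3, while for a ≠ 0 the curve γ(t) = (t, −t²/a) shows the 1-type of (z₁³ + a z₁ z₂, z₂²) is at least 4. -/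
/-!
For `a = 0` the ideal is monomial, so along any curve its order of contact is at most the larger
exponent. For `a ≠ 0` the curve `t ↦ (t, -t²/a)` lies on `z₁³ + a z₁ z₂ = 0`, so only `z₂²`
contributes, to order `4`.
-/

open PowerSeries

theorem ENat.min_nsmul_le_nsmul_min {m n : ℕ} (hnm : n ≤ m) (x y : ℕ∞) :
    min (m • x) (n • y) ≤ m • min x y := by
  rcases le_total x y with hxy | hyx
  · rw [min_eq_left hxy]
    exact min_le_left _ _
  · rw [min_eq_right hyx]
    exact (min_le_right _ _).trans (nsmul_le_nsmul_left zero_le hnm)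

namespace PowerSeries

theorem min_order_pow_le_nsmul_min {R : Type*} [Semiring R] [NoZeroDivisors R] [Nontrivial R]
    {m n : ℕ} (hnm : n ≤ m) (φ ψ : R⟦X⟧) :
    min (φ ^ m).order (ψ ^ n).order ≤ m • min φ.order ψ.order := by
  rw [order_pow, order_pow]
  exact ENat.min_nsmul_le_nsmul_min hnm _ _

theorem order_C_mul_X_pow {R : Type*} [Semiring R] {c : R} (hc : c ≠ 0) (n : ℕ) :
    (C c * (X : R⟦X⟧) ^ n).order = n := by
  rw [← monomial_eq_C_mul_X_pow, order_monomial_of_ne_zero n c hc]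

theorem X_pow_three_add_C_mul_X_mul_eq_zero {K : Type*} [Field K] {a : K} (ha : a ≠ 0) :
    (X : K⟦X⟧) ^ 3 + C a * X * (C (-a⁻¹) * X ^ 2) = 0 := by
  have hC : C a * C (-a⁻¹) = (-1 : K⟦X⟧) := by
    rw [← map_mul, mul_neg, mul_inv_cancel₀ ha, map_neg, map_one]
  linear_combination (X : K⟦X⟧) ^ 3 * hC

end PowerSeries

/-- Combined statement: (i) for every nonconstant power series curve
`γ = (γ₁, γ₂)` with `γ(0) = 0`, `min (v(γ₁³)) (v(γ₂²)) ≤ 3 · min (v(γ₁)) (v(γ₂))`;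
(ii) there is such a curve achieving equality, so the 1-type of `(z₁³, z₂²)` is
exactly 3; (iii) for every `a ≠ 0`, the curve `γ(t) = (t, -t²/a)` shows the
1-type of `(z₁³ + a z₁ z₂, z₂²)` is at least 4. -/
theorem stmt_19 :
    (∀ γ₁ γ₂ : ℂ⟦X⟧, constantCoeff γ₁ = 0 → constantCoeff γ₂ = 0 →
      ¬(γ₁ = 0 ∧ γ₂ = 0) →
      min (γ₁ ^ 3).order (γ₂ ^ 2).order ≤ 3 * min γ₁.order γ₂.order) ∧
    (∃ γ₁ γ₂ : ℂ⟦X⟧, constantCoeff γ₁ = 0 ∧ constantCoeff γ₂ = 0 ∧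
      ¬(γ₁ = 0 ∧ γ₂ = 0) ∧
      min (γ₁ ^ 3).order (γ₂ ^ 2).order = 3 * min γ₁.order γ₂.order) ∧
    (∀ a : ℂ, a ≠ 0 →
      4 * min (X : ℂ⟦X⟧).order (C (-a⁻¹) * (X : ℂ⟦X⟧) ^ 2).order ≤
        min ((X : ℂ⟦X⟧) ^ 3 + C a * X * (C (-a⁻¹) * X ^ 2)).order
          ((C (-a⁻¹) * (X : ℂ⟦X⟧) ^ 2) ^ 2).order) := by
  refine ⟨fun γ₁ γ₂ _ _ _ => ?_, ⟨X ^ 2, X ^ 3, by simp, by simp, ?_, ?_⟩, fun a ha => ?_⟩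
  · simpa [nsmul_eq_mul] using min_order_pow_le_nsmul_min (by norm_num : 2 ≤ 3) γ₁ γ₂
  · exact fun h => X_ne_zero (pow_eq_zero_iff two_ne_zero |>.mp h.1)
  · simp only [← pow_mul, order_X_pow]
    decide
  · have hc : -a⁻¹ ≠ 0 := neg_ne_zero.mpr (inv_ne_zero ha)
    rw [X_pow_three_add_C_mul_X_mul_eq_zero ha, order_zero, order_X, order_pow,
      order_C_mul_X_pow hc]
    decide
end
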